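/- Let γ ∈ (0,1), k > 0, let W be a random variable with P(W > 0) = 1, and let H be a real random variable whose characteristic function φ_H satisfies |φ_H(t)| ≤ E[e^{−k|t|^γ W}] for all t ∈ ℝ. Then P(H = 0) = 0. -/

import Mathlib

open MeasureTheory ProbabilityTheory Filter Real
open scoped ENNReal NNReal Topology

noncomputable section

/-- Vertices of the Ulam–Harris tree: finite sequences of natural numbers
(membership in the tree forces all entries to be ≥ 1). -/
abbrev Vertex : Type := List ℕ

/-- Convergence in distribution of real random variables (possibly defined on
different probability spaces), tested against bounded continuous functions. -/
def TendstoInDistrib {Ω Ω' : Type*} [MeasurableSpace Ω] [MeasurableSpace Ω']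
    (P : Measure Ω) (X : ℕ → Ω → ℝ) (P' : Measure Ω') (Z : Ω' → ℝ) : Prop :=
  ∀ f : BoundedContinuousFunction ℝ ℝ,
    Tendsto (fun n => ∫ ω, f (X n ω) ∂P) atTop (nhds (∫ ω, f (Z ω) ∂P'))

/-- Characteristic function of a real random variable. -/
def charFunOf {Ω : Type*} [MeasurableSpace Ω] (P : Measure Ω) (X : Ω → ℝ) (t : ℝ) : ℂ :=
  ∫ ω, Complex.exp (Complex.I * (t : ℂ) * (X ω : ℂ)) ∂P

/-- Condition (H): regularly varying right tail of index γ with constant c₊ = c,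
where `cdf μ` is the cumulative distribution function of μ. -/
def CondH (μ : Measure ℝ) (γ c : ℝ) : Prop :=
  Tendsto (fun x : ℝ => x ^ γ * (1 - cdf μ x)) atTop (nhds c)

/-- The constant k = π c₊ / (2 Γ(γ) sin(π γ / 2)). -/
def kconst (γ c : ℝ) : ℝ := Real.pi * c / (2 * Real.Gamma γ * Real.sin (Real.pi * γ / 2))

/-- g̃(t) = exp(−k |t|^γ (1 − i tan(πγ/2) sign t)), the characteristic function of the
γ-stable law appearing as the limit. -/
def gtilde (γ c t : ℝ) : ℂ :=
  Complex.exp ((-(kconst γ c * |t| ^ γ) : ℝ) *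
    (1 - Complex.I * (Real.tan (Real.pi * γ / 2) : ℝ) * (Real.sign t : ℝ)))

/-- The data of a branching random walk: for every vertex `v` of the Ulam–Harris tree,
an offspring number `N v` and displacements `ξ v i`, `i = 1, 2, ...`. -/
structure BRWData (Ω : Type*) [MeasureSpace Ω] where
  N : Vertex → Ω → ℕ
  ξ : Vertex → ℕ → Ω → ℝ

namespace BRWData

variable {Ω : Type*} [MeasureSpace Ω] (b : BRWData Ω)

/-- The bundled randomness attached to a vertex. -/
def pt (v : Vertex) (ω : Ω) : ℕ × (ℕ → ℝ) := (b.N v ω, fun i => b.ξ v i ω)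

/-- Membership in the Galton–Watson tree 𝕋. -/
def T (ω : Ω) (v : Vertex) : Prop :=
  ∀ (k : ℕ) (h : k < v.length), 1 ≤ v.get ⟨k, h⟩ ∧ v.get ⟨k, h⟩ ≤ b.N (v.take k) ω

/-- The set of vertices of the n-th generation of the tree. -/
def gen (n : ℕ) (ω : Ω) : Set Vertex := {v | v.length = n ∧ b.T ω v}

/-- The position `S v` of the particle `v`. -/
def S (v : Vertex) (ω : Ω) : ℝ := ∑ k : Fin v.length, b.ξ (v.take k) (v.get k) ω

/-- E[Σ_{i=1}^N e^{θ ξ_i}], as an extended nonnegative real. -/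
def νe (θ : ℝ) : ℝ≥0∞ :=
  ∫⁻ ω, ∑ i ∈ Finset.Icc 1 (b.N [] ω), ENNReal.ofReal (Real.exp (θ * b.ξ [] i ω))

/-- The log-Laplace transform ν(θ) = log E[Σ_{i=1}^N e^{θ ξ_i}]. -/
def ν (θ : ℝ) : ℝ := Real.log (b.νe θ).toReal

/-- ν'(θ) = e^{−ν(θ)} E[Σ_{i=1}^N ξ_i e^{θ ξ_i}]. -/
def ν' (θ : ℝ) : ℝ :=
  Real.exp (-b.ν θ) *
    ∫ ω, ∑ i ∈ Finset.Icc 1 (b.N [] ω), b.ξ [] i ω * Real.exp (θ * b.ξ [] i ω)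

/-- The critical parameter θ₀ = inf {θ > 0 : ν(θ) = θ ν'(θ)}. -/
def θ₀ : ℝ := sInf {θ : ℝ | 0 < θ ∧ b.ν θ = θ * b.ν' θ}

/-- The additive martingale W_n(θ). -/
def W (θ : ℝ) (n : ℕ) (ω : Ω) : ℝ :=
  Real.exp (-(n * b.ν θ)) *
    ∑' v : Vertex, Set.indicator (b.gen n ω) (fun u => Real.exp (θ * b.S u ω)) v

/-- The derivative martingale D_n. -/
def D (n : ℕ) (ω : Ω) : ℝ :=
  -∑' v : Vertex, Set.indicator (b.gen n ω)
      (fun u => (b.θ₀ * b.S u ω - n * b.ν b.θ₀) * Real.exp (b.θ₀ * b.S u ω - n * b.ν b.θ₀)) v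

/-- The perturbed weighted sum Y_n(θ) = Σ_{|v|=n} e^{θ S_v} Y_v. -/
def Yn (Y : Vertex → Ω → ℝ) (θ : ℝ) (n : ℕ) (ω : Ω) : ℝ :=
  ∑' v : Vertex, Set.indicator (b.gen n ω) (fun u => Real.exp (θ * b.S u ω) * Y u ω) v

/-- The maximal position R*_n(θ) of the perturbed branching random walk,
with perturbations (1/θ) log (Y_v / E_v). -/
def Rstar (Y E : Vertex → Ω → ℝ) (θ : ℝ) (n : ℕ) (ω : Ω) : ℝ :=
  sSup ((fun v => b.S v ω + (1/θ) * Real.log (Y v ω / E v ω)) '' b.gen n ω)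

/-- Basic assumptions on the branching random walk: measurability, the vertex
variables (N_v, (ξ_{v,i})_i) are i.i.d., and P(N = 0) = 0. -/
structure IsBRW : Prop where
  meas_N : ∀ v, Measurable (b.N v)
  meas_ξ : ∀ v i, Measurable (b.ξ v i)
  ident : ∀ v, IdentDistrib (b.pt v) (b.pt []) ℙ ℙ
  indep : iIndepFun (m := fun _ : Vertex => inferInstance) b.pt ℙ
  no_death : ∀ v, ∀ᵐ ω, 1 ≤ b.N v ω

/-- ν is finite on an open interval containing 0. -/
def NuFin : Prop := ∃ ε > (0:ℝ), ∀ t ∈ Set.Ioo (-ε) ε, b.νe t ≠ ⊤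

/-- The critical parameter θ₀ is finite (the defining set is nonempty). -/
def ThetaZeroFin : Prop := {θ : ℝ | 0 < θ ∧ b.ν θ = θ * b.ν' θ}.Nonempty

/-- Condition (L1): E[Σ_{i=1}^N e^{θ₀ ξ_i} ξ_i²] < ∞. -/
def CondL1 : Prop :=
  (∫⁻ ω, ∑ i ∈ Finset.Icc 1 (b.N [] ω),
      ENNReal.ofReal (Real.exp (b.θ₀ * b.ξ [] i ω) * (b.ξ [] i ω) ^ 2)) < ⊤

/-- X̃ = Σ_{i=1}^N e^{θ₀ ξ_i} ξ_i. -/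
def Xtil (ω : Ω) : ℝ :=
  ∑ i ∈ Finset.Icc 1 (b.N [] ω), Real.exp (b.θ₀ * b.ξ [] i ω) * b.ξ [] i ω

/-- X = Σ_{i=1}^N e^{θ₀ ξ_i}. -/
def Xvar (ω : Ω) : ℝ := ∑ i ∈ Finset.Icc 1 (b.N [] ω), Real.exp (b.θ₀ * b.ξ [] i ω)

/-- Condition (L2): E[X̃ log₊ X̃] < ∞ and E[X log₊² X] < ∞. -/
def CondL2 : Prop :=
  (∫⁻ ω, ENNReal.ofReal (b.Xtil ω * Real.log (max (b.Xtil ω) 1))) < ⊤ ∧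
  (∫⁻ ω, ENNReal.ofReal (b.Xvar ω * (Real.log (max (b.Xvar ω) 1)) ^ 2)) < ⊤

/-- The condition E[W₁(θ) log₊ W₁(θ)] < ∞. -/
def CondW1 (θ : ℝ) : Prop :=
  (∫⁻ ω, ENNReal.ofReal (b.W θ 1 ω * Real.log (max (b.W θ 1 ω) 1))) < ⊤

/-- σ² = E[Σ_{i=1}^N (θ₀ ξ_i − ν(θ₀))² e^{θ₀ ξ_i − ν(θ₀)}]. -/
def σsq : ℝ :=
  ∫ ω, ∑ i ∈ Finset.Icc 1 (b.N [] ω),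
    (b.θ₀ * b.ξ [] i ω - b.ν b.θ₀) ^ 2 * Real.exp (b.θ₀ * b.ξ [] i ω - b.ν b.θ₀)

/-- c_∞ = (2/(π σ²))^{1/2}. -/
def cinf : ℝ := Real.sqrt (2 / (Real.pi * b.σsq))

/-- The non-lattice condition: for every s, P(ξ₁, ξ₂, … ∈ sℤ) < 1. -/
def NonLattice : Prop :=
  ∀ s : ℝ, ℙ {ω | ∀ i ∈ Finset.Icc 1 (b.N [] ω), ∃ m : ℤ, b.ξ [] i ω = s * m} < 1

end BRWData

/-- The bundled family (BRW vertex variables, Y-perturbations). -/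
def fam2 {Ω : Type*} [MeasureSpace Ω] (b : BRWData Ω) (Y : Vertex → Ω → ℝ) :
    (j : Vertex ⊕ Vertex) → Ω →
      Sum.elim (fun _ : Vertex => ℕ × (ℕ → ℝ)) (fun _ : Vertex => ℝ) j
  | Sum.inl v => b.pt v
  | Sum.inr v => Y v

def sum2Space : (j : Vertex ⊕ Vertex) →
    MeasurableSpace (Sum.elim (fun _ : Vertex => ℕ × (ℕ → ℝ)) (fun _ : Vertex => ℝ) j)
  | Sum.inl _ => (inferInstance : MeasurableSpace (ℕ × (ℕ → ℝ)))
  | Sum.inr _ => (inferInstance : MeasurableSpace ℝ)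

/-- The bundled family (BRW vertex variables, Y-perturbations, E-perturbations). -/
def fam3 {Ω : Type*} [MeasureSpace Ω] (b : BRWData Ω) (Y E : Vertex → Ω → ℝ) :
    (j : Vertex ⊕ (Vertex ⊕ Vertex)) → Ω →
      Sum.elim (fun _ : Vertex => ℕ × (ℕ → ℝ))
        (Sum.elim (fun _ : Vertex => ℝ) (fun _ : Vertex => ℝ)) j
  | Sum.inl v => b.pt v
  | Sum.inr (Sum.inl v) => Y v
  | Sum.inr (Sum.inr v) => E v

def sum3Space : (j : Vertex ⊕ (Vertex ⊕ Vertex)) →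
    MeasurableSpace (Sum.elim (fun _ : Vertex => ℕ × (ℕ → ℝ))
      (Sum.elim (fun _ : Vertex => ℝ) (fun _ : Vertex => ℝ)) j)
  | Sum.inl _ => (inferInstance : MeasurableSpace (ℕ × (ℕ → ℝ)))
  | Sum.inr (Sum.inl _) => (inferInstance : MeasurableSpace ℝ)
  | Sum.inr (Sum.inr _) => (inferInstance : MeasurableSpace ℝ)

/-- The Y-perturbations: i.i.d. with law μ, and the whole family
((N_v, ξ_v))_v, (Y_v)_v is mutually independent. -/
structure HasPerturbationY {Ω : Type*} [MeasureSpace Ω] (b : BRWData Ω)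
    (Y : Vertex → Ω → ℝ) (μ : Measure ℝ) : Prop where
  isBRW : b.IsBRW
  measY : ∀ v, Measurable (Y v)
  lawY : ∀ v, Measure.map (Y v) ℙ = μ
  indep : iIndepFun (m := sum2Space) (fam2 b Y) ℙ

/-- The full perturbed BRW model: (Y_v)_v i.i.d. with law μ, (E_v)_v i.i.d. standard
exponential, and the families (N_v, ξ_v)_v, (Y_v)_v, (E_v)_v mutually independent. -/
structure IsPerturbedBRW {Ω : Type*} [MeasureSpace Ω] (b : BRWData Ω)
    (Y E : Vertex → Ω → ℝ) (μ : Measure ℝ) : Prop where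
  isBRW : b.IsBRW
  measY : ∀ v, Measurable (Y v)
  measE : ∀ v, Measurable (E v)
  lawY : ∀ v, Measure.map (Y v) ℙ = μ
  lawE : ∀ v, Measure.map (E v) ℙ = expMeasure 1
  indep : iIndepFun (m := sum3Space) (fam3 b Y E) ℙ

/-- The argument for almost sure positivity: a characteristic function bound
excludes an atom at 0. -/
theorem no_atom_at_zero_of_charFun_bound
    {Ω Ω' : Type} [MeasureSpace Ω] [MeasureSpace Ω']
    [IsProbabilityMeasure (ℙ : Measure Ω)] [IsProbabilityMeasure (ℙ : Measure Ω')]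
    (γ k : ℝ) (hγ : γ ∈ Set.Ioo (0:ℝ) 1) (hk : 0 < k)
    (W : Ω → ℝ) (hWmeas : Measurable W) (hWpos : ∀ᵐ ω, 0 < W ω)
    (H : Ω' → ℝ) (hHmeas : Measurable H)
    (hbound : ∀ t : ℝ, ‖charFunOf (ℙ : Measure Ω') H t‖ ≤
      ∫ ω, Real.exp (-(k * |t| ^ γ * W ω))) :
    (ℙ : Measure Ω') {ω' | H ω' = 0} = 0 := by
  obtain ⟨hγ0, hγ1⟩ := hγ
  set G : ℝ → ℝ := fun t => ∫ ω, Real.exp (-(k * |t| ^ γ * W ω)) with hGdef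
  have hWnn : ∀ᵐ ω, 0 ≤ W ω := hWpos.mono fun ω h => h.le
  have hGint : ∀ t : ℝ, Integrable (fun ω => Real.exp (-(k * |t| ^ γ * W ω))) ℙ := by
    intro t
    refine (integrable_const (1:ℝ)).mono' ?_ ?_
    · exact ((measurable_const.mul hWmeas).neg.exp).aestronglyMeasurable
    · filter_upwards [hWnn] with ω hω
      rw [Real.norm_eq_abs, abs_of_pos (Real.exp_pos _), Real.exp_le_one_iff]
      have : 0 ≤ k * |t| ^ γ * W ω := by positivity
      linarith
  -- G is antitone on positive reals
  have hGanti : ∀ s t : ℝ, 0 < s → s ≤ t → G t ≤ G s := by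
    intro s t hs hst
    refine integral_mono_ae (hGint t) (hGint s) ?_
    filter_upwards [hWnn] with ω hω
    have h1 : |s| ^ γ ≤ |t| ^ γ := by
      apply Real.rpow_le_rpow (abs_nonneg _) _ hγ0.le
      rw [abs_of_pos hs, abs_of_pos (hs.trans_le hst)]; exact hst
    have h2 : k * |s| ^ γ * W ω ≤ k * |t| ^ γ * W ω := by
      apply mul_le_mul_of_nonneg_right _ hω
      exact mul_le_mul_of_nonneg_left h1 hk.le
    exact Real.exp_le_exp.mpr (by linarith)
  -- G tends to 0 along naturals
  have hGzero : Tendsto (fun n : ℕ => G n) atTop (𝓝 0) := by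
    have h0 : (0:ℝ) = ∫ _ω : Ω, (0:ℝ) ∂ℙ := by simp
    rw [h0]
    refine tendsto_integral_of_dominated_convergence (fun _ => 1)
      (fun n => ((measurable_const.mul hWmeas).neg.exp).aestronglyMeasurable)
      (integrable_const 1) (fun n => ?_) ?_
    · filter_upwards [hWnn] with ω hω
      rw [Real.norm_eq_abs, abs_of_pos (Real.exp_pos _), Real.exp_le_one_iff]
      have : 0 ≤ k * |(n:ℝ)| ^ γ * W ω := by positivity
      linarith
    · filter_upwards [hWpos] with ω hω
      have h1 : Tendsto (fun n : ℕ => ((n:ℝ)) ^ γ) atTop atTop :=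
        (tendsto_rpow_atTop hγ0).comp tendsto_natCast_atTop_atTop
      have h2 : Tendsto (fun n : ℕ => k * ((n:ℝ)) ^ γ * W ω) atTop atTop := by
        have := (h1.const_mul_atTop hk).atTop_mul_const hω
        simpa using this
      have h3 : Tendsto (fun n : ℕ => Real.exp (-(k * ((n:ℝ)) ^ γ * W ω))) atTop (𝓝 0) :=
        Real.tendsto_exp_atBot.comp (tendsto_neg_atTop_atBot.comp h2)
      refine h3.congr fun n => ?_
      rw [abs_of_nonneg (Nat.cast_nonneg n)]
  -- the averaged cosine functionals
  set F : ℕ → Ω' → ℝ := fun n ω =>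
    (1/(n:ℝ)) * ∫ t in Set.Ioc ((n:ℝ)) (2*n), Real.cos (t * H ω) with hFdef
  have hle2 : ∀ n : ℕ, (n:ℝ) ≤ 2 * n := fun n => by
    have := Nat.cast_nonneg (α := ℝ) n; linarith
  have hIocvol : ∀ n : ℕ, (volume (Set.Ioc ((n:ℝ)) (2*n))).toReal = n := by
    intro n
    rw [Real.volume_Ioc, ENNReal.toReal_ofReal (by linarith [hle2 n])]
    ring
  -- product integrability for Fubini
  have hprod : ∀ n : ℕ, Integrable (fun p : ℝ × Ω' => Real.cos (p.1 * H p.2))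
      ((volume.restrict (Set.Ioc ((n:ℝ)) (2*n))).prod ℙ) := by
    intro n
    haveI : IsFiniteMeasure (volume.restrict (Set.Ioc ((n:ℝ)) (2*n))) :=
      ⟨by rw [Measure.restrict_apply_univ]; exact measure_Ioc_lt_top⟩
    refine (integrable_const (1:ℝ)).mono' ?_ ?_
    · exact ((measurable_fst.mul (hHmeas.comp measurable_snd)).cos).aestronglyMeasurable
    · exact Eventually.of_forall fun p => by
        rw [Real.norm_eq_abs]; exact Real.abs_cos_le_one _
  -- the real part of the characteristic function is the expectation of cosine
  have hre : ∀ t : ℝ, ∫ ω, Real.cos (t * H ω) ∂(ℙ : Measure Ω') =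
      (charFunOf (ℙ : Measure Ω') H t).re := by
    intro t
    have hci : Integrable (fun ω => Complex.exp (Complex.I * (t:ℂ) * (H ω : ℂ))) ℙ := by
      refine (integrable_const (1:ℝ)).mono' ?_ ?_
      · exact ((measurable_const.mul
          (Complex.measurable_ofReal.comp hHmeas)).cexp).aestronglyMeasurable
      · refine Eventually.of_forall fun ω => ?_
        rw [Complex.norm_exp]
        simp
    rw [charFunOf, ← RCLike.re_to_complex, ← integral_re hci]
    refine integral_congr_ae (Eventually.of_forall fun ω => ?_)
    simp only [RCLike.re_to_complex]
    have hrw : Complex.I * (t:ℂ) * (H ω : ℂ) = ((t * H ω : ℝ) : ℂ) * Complex.I := by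
      push_cast; ring
    rw [hrw]
    rw [show ((t * H ω : ℝ) : ℂ) = (t:ℂ) * (H ω : ℂ) by push_cast; ring] at *
    rw [← Complex.ofReal_mul, Complex.exp_ofReal_mul_I_re]
  -- Fubini and the bound: E[F n] ≤ G n for n ≥ 1
  have hbnd : ∀ n : ℕ, 1 ≤ n → (∫ ω, F n ω ∂(ℙ : Measure Ω')) ≤ G n := by
    intro n hn
    have hn0 : (0:ℝ) < n := by exact_mod_cast hn
    have hswap := integral_integral_swap (f := fun t (ω : Ω') => Real.cos (t * H ω)) (hprod n)
    have key : ∫ ω, F n ω ∂(ℙ : Measure Ω') =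
        (1/(n:ℝ)) * ∫ t in Set.Ioc ((n:ℝ)) (2*n), (charFunOf (ℙ : Measure Ω') H t).re := by
      rw [hFdef]
      rw [integral_const_mul]
      congr 1
      rw [← hswap]
      exact setIntegral_congr_fun measurableSet_Ioc fun t _ => hre t
    rw [key]
    -- integrability of the two integrands on the slab
    have hint1 : IntegrableOn (fun t => (charFunOf (ℙ : Measure Ω') H t).re)
        (Set.Ioc ((n:ℝ)) (2*n)) volume := by
      have := (hprod n).integral_prod_left
      refine this.congr (Eventually.of_forall fun t => hre t)
    have hint2 : IntegrableOn G (Set.Ioc ((n:ℝ)) (2*n)) volume := by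
      have hanti : AntitoneOn G (Set.uIcc ((n:ℝ)) (2*n)) := by
        intro s hs t ht hst
        rw [Set.uIcc_of_le (hle2 n)] at hs ht
        exact hGanti s t (lt_of_lt_of_le hn0 hs.1) hst
      exact hanti.intervalIntegrable.1
    have step1 : ∫ t in Set.Ioc ((n:ℝ)) (2*n), (charFunOf (ℙ : Measure Ω') H t).re ≤
        ∫ t in Set.Ioc ((n:ℝ)) (2*n), G t := by
      refine setIntegral_mono_on hint1 hint2 measurableSet_Ioc fun t ht => ?_
      exact (Complex.re_le_norm _).trans (hbound t)
    have step2 : ∫ t in Set.Ioc ((n:ℝ)) (2*n), G t ≤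
        ∫ _t in Set.Ioc ((n:ℝ)) (2*n), G n := by
      refine setIntegral_mono_on hint2 (integrableOn_const measure_Ioc_lt_top.ne)
        measurableSet_Ioc fun t ht => ?_
      exact hGanti n t hn0 ht.1.le
    have step3 : ∫ _t in Set.Ioc ((n:ℝ)) (2*n), G n = (n:ℝ) * G n := by
      rw [setIntegral_const, smul_eq_mul, measureReal_def, hIocvol n]
    calc (1/(n:ℝ)) * ∫ t in Set.Ioc ((n:ℝ)) (2*n), (charFunOf (ℙ : Measure Ω') H t).re
        ≤ (1/(n:ℝ)) * ((n:ℝ) * G n) := by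
          apply mul_le_mul_of_nonneg_left _ (by positivity)
          exact (step1.trans step2).trans_eq step3
      _ = G n := by field_simp
  -- dominated convergence: E[F n] → P(H = 0)
  have hmeas0 : MeasurableSet {ω' : Ω' | H ω' = 0} := hHmeas (measurableSet_singleton 0)
  have hDCT : Tendsto (fun n => ∫ ω, F n ω ∂(ℙ : Measure Ω')) atTop
      (𝓝 (((ℙ : Measure Ω') {ω' | H ω' = 0}).toReal)) := by
    have hlim : ((ℙ : Measure Ω') {ω' | H ω' = 0}).toReal =
        ∫ ω, Set.indicator {ω' : Ω' | H ω' = 0} (fun _ => (1:ℝ)) ω ∂(ℙ : Measure Ω') := by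
      rw [integral_indicator_const (1:ℝ) hmeas0, smul_eq_mul, mul_one, measureReal_def]
    rw [hlim]
    refine tendsto_integral_of_dominated_convergence (fun _ => 1)
      (fun n => ?_) (integrable_const 1) (fun n => ?_) ?_
    · -- measurability of F n
      exact (((hprod n).integral_prod_right).const_mul _).aestronglyMeasurable
    · -- uniform bound
      refine Eventually.of_forall fun ω => ?_
      rcases Nat.eq_zero_or_pos n with h0 | hpos
      · subst h0
        simp [hFdef]
      · have hn0 : (0:ℝ) < n := by exact_mod_cast hpos
        have hbig : ‖∫ t in Set.Ioc ((n:ℝ)) (2*n), Real.cos (t * H ω)‖ ≤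
            1 * (volume (Set.Ioc ((n:ℝ)) (2*n))).toReal := by
          refine norm_setIntegral_le_of_norm_le_const measure_Ioc_lt_top
            (fun t _ => ?_)
          rw [Real.norm_eq_abs]; exact Real.abs_cos_le_one _
        rw [one_mul, hIocvol n] at hbig
        rw [hFdef]
        simp only [norm_mul, Real.norm_eq_abs]
        calc |1/(n:ℝ)| * |∫ t in Set.Ioc ((n:ℝ)) (2*n), Real.cos (t * H ω)|
            ≤ |1/(n:ℝ)| * n := by
              apply mul_le_mul_of_nonneg_left _ (abs_nonneg _)
              exact hbig
          _ = 1 := by rw [abs_of_pos (by positivity)]; field_simp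
    · -- pointwise convergence
      refine Eventually.of_forall fun ω => ?_
      by_cases hx : H ω = 0
      · have hval : ∀ n : ℕ, 1 ≤ n → F n ω = 1 := by
          intro n hn
          have hn0 : (0:ℝ) < n := by exact_mod_cast hn
          rw [hFdef]
          simp only [hx, mul_zero, Real.cos_zero]
          rw [setIntegral_const, smul_eq_mul, mul_one, measureReal_def, hIocvol n]
          field_simp
        have : Set.indicator {ω' : Ω' | H ω' = 0} (fun _ => (1:ℝ)) ω = 1 := by
          simp [Set.indicator_apply, Set.mem_setOf_eq, hx]
        rw [this]
        refine Tendsto.congr' ?_ tendsto_const_nhds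
        filter_upwards [eventually_ge_atTop 1] with n hn
        exact (hval n hn).symm
      · have : Set.indicator {ω' : Ω' | H ω' = 0} (fun _ => (1:ℝ)) ω = 0 := by
          simp [Set.indicator_apply, Set.mem_setOf_eq, hx]
        rw [this]
        set x := H ω with hxdef
        have hxne : x ≠ 0 := hx
        refine squeeze_zero_norm' (a := fun n : ℕ => 2/|x| * (1/(n:ℝ))) ?_ ?_
        · refine Filter.eventually_atTop.mpr ⟨1, fun n hn => ?_⟩
          have hn0 : (0:ℝ) < n := by exact_mod_cast hn
          show ‖F n ω‖ ≤ 2 / |x| * (1/(n:ℝ))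
          have hcomp : ∫ t in ((n:ℝ))..(2*n), Real.cos (t * x) =
              x⁻¹ • ∫ u in ((n:ℝ)*x)..(2*n*x), Real.cos u :=
            intervalIntegral.integral_comp_mul_right Real.cos hxne
          have hval : F n ω = (1/(n:ℝ)) * (x⁻¹ * (Real.sin (2*n*x) - Real.sin (n*x))) := by
            rw [hFdef]
            simp only
            rw [← intervalIntegral.integral_of_le (hle2 n), hcomp,
              integral_cos, smul_eq_mul]
          rw [hval]
          rw [norm_mul, norm_mul, Real.norm_eq_abs, Real.norm_eq_abs, Real.norm_eq_abs]
          rw [abs_of_pos (show (0:ℝ) < 1/(n:ℝ) by positivity)]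
          rw [mul_comm (2/|x|) (1/(n:ℝ))]
          apply mul_le_mul_of_nonneg_left _ (by positivity)
          have h1 : |x⁻¹| = |x|⁻¹ := abs_inv x
          have h2 : |Real.sin (2*n*x) - Real.sin (n*x)| ≤ 2 := by
            have ha := Real.abs_sin_le_one (2*n*x)
            have hb := Real.abs_sin_le_one (n*x)
            calc |Real.sin (2*n*x) - Real.sin (n*x)|
                = |Real.sin (2*n*x) + -Real.sin (n*x)| := by rw [sub_eq_add_neg]
              _ ≤ |Real.sin (2*n*x)| + |-Real.sin (n*x)| := abs_add_le _ _
              _ ≤ 2 := by rw [abs_neg]; linarith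
          rw [h1, div_eq_mul_inv, mul_comm (2:ℝ) |x|⁻¹]
          exact mul_le_mul_of_nonneg_left h2 (by positivity)
        · have : Tendsto (fun n : ℕ => (1:ℝ)/n) atTop (𝓝 0) :=
            tendsto_one_div_atTop_nhds_zero_nat
          have := this.const_mul (2/|x|)
          simpa using this
  -- conclude
  have hfin : ((ℙ : Measure Ω') {ω' | H ω' = 0}).toReal ≤ 0 := by
    refine le_of_tendsto_of_tendsto hDCT hGzero ?_
    filter_upwards [eventually_ge_atTop 1] with n hn
    exact hbnd n hn
  have hnn : 0 ≤ ((ℙ : Measure Ω') {ω' | H ω' = 0}).toReal := ENNReal.toReal_nonneg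
  have heq : ((ℙ : Measure Ω') {ω' | H ω' = 0}).toReal = 0 := le_antisymm hfin hnn
  rcases (ENNReal.toReal_eq_zero_iff _).mp heq with h | h
  · exact h
  · exact absurd h (measure_ne_top _ _)

end
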